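/- Safety theorem for the first (sufficient) type system: if ⊢₁ M : T and role A dominates T, then either M diverges under A or M evaluates under A to some value V. -/
import Mathlib


namespace LRBAC

/-- Role domination: `dom A B` means `A = A ⊔ B`. -/
def dom {R : Type*} [BooleanAlgebra R] (A B : R) : Prop := A = A ⊔ B

/-- Role modifiers: amplification `up A` and restriction `dn A`. -/
inductive Mod (R : Type*) where
  | up (A : R)
  | dn (A : R)

/-- Applying a role modifier to a context role. -/
def Mod.app {R : Type*} [BooleanAlgebra R] : Mod R → R → R
  | .up A, C => A ⊔ C
  | .dn A, C => A ⊓ C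

/-- Terms of λ-RBAC (de Bruijn representation). -/
inductive Tm (R : Type*) where
  | base (n : ℕ)
  | var (n : ℕ)
  | abs (M : Tm R)
  | app (M N : Tm R)
  | fix (M : Tm R)
  | grd (A : R) (M : Tm R)
  | chk (M : Tm R)
  | unit (M : Tm R)
  | bind (M N : Tm R)
  | mod (m : Mod R) (M : Tm R)

/-- de Bruijn shifting. -/
def Tm.shift {R : Type*} (d : ℕ) : ℕ → Tm R → Tm R
  | _, .base n => .base n
  | c, .var n => .var (if n < c then n else n + d)
  | c, .abs M => .abs (Tm.shift d (c+1) M)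
  | c, .app M N => .app (Tm.shift d c M) (Tm.shift d c N)
  | c, .fix M => .fix (Tm.shift d c M)
  | c, .grd A M => .grd A (Tm.shift d c M)
  | c, .chk M => .chk (Tm.shift d c M)
  | c, .unit M => .unit (Tm.shift d c M)
  | c, .bind M N => .bind (Tm.shift d c M) (Tm.shift d (c+1) N)
  | c, .mod m M => .mod m (Tm.shift d c M)

/-- Capture-avoiding substitution: `Tm.subst k N M = M[k := N]`. -/
def Tm.subst {R : Type*} : ℕ → Tm R → Tm R → Tm R
  | _, _, .base n => .base n
  | k, N, .var n => if n = k then N else if k < n then .var (n-1) else .var n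
  | k, N, .abs M => .abs (Tm.subst (k+1) (Tm.shift 1 0 N) M)
  | k, N, .app M M' => .app (Tm.subst k N M) (Tm.subst k N M')
  | k, N, .fix M => .fix (Tm.subst k N M)
  | k, N, .grd A M => .grd A (Tm.subst k N M)
  | k, N, .chk M => .chk (Tm.subst k N M)
  | k, N, .unit M => .unit (Tm.subst k N M)
  | k, N, .bind M M' => .bind (Tm.subst k N M) (Tm.subst (k+1) (Tm.shift 1 0 N) M')
  | k, N, .mod m M => .mod m (Tm.subst k N M)

/-- Values. -/
inductive Tm.IsValue {R : Type*} : Tm R → Prop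
  | base (n : ℕ) : Tm.IsValue (.base n)
  | var (n : ℕ) : Tm.IsValue (.var n)
  | abs (M : Tm R) : Tm.IsValue (.abs M)
  | grd (A : R) (M : Tm R) : Tm.IsValue (.grd A M)
  | unit (M : Tm R) : Tm.IsValue (.unit M)

variable {R : Type*} [BooleanAlgebra R]

/-- Role-indexed small-step evaluation `A ⊢ M → M'`. -/
inductive Eval : R → Tm R → Tm R → Prop
  | rApp {A : R} {M N : Tm R} : Eval A (.app (.abs M) N) (Tm.subst 0 N M)
  | cApp {A : R} {M M' N : Tm R} : Eval A M M' → Eval A (.app M N) (.app M' N)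
  | rFix {A : R} {M : Tm R} :
      Eval A (.fix (.abs M)) (Tm.subst 0 (.fix (.abs M)) M)
  | cFix {A : R} {M M' : Tm R} : Eval A M M' → Eval A (.fix M) (.fix M')
  | rChk {A B : R} {M : Tm R} : dom A B → Eval A (.chk (.grd B M)) (.unit M)
  | cChk {A : R} {M M' : Tm R} : Eval A M M' → Eval A (.chk M) (.chk M')
  | rBind {A : R} {M N : Tm R} : Eval A (.bind (.unit M) N) (Tm.subst 0 M N)
  | cBind {A : R} {M M' N : Tm R} : Eval A M M' → Eval A (.bind M N) (.bind M' N)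
  | rMod {A : R} {m : Mod R} {V : Tm R} : V.IsValue → Eval A (.mod m V) V
  | cMod {A : R} {m : Mod R} {M M' : Tm R} :
      Eval (m.app A) M M' → Eval A (.mod m M) (.mod m M')

/-- Role errors `M ⇑ᴬ err`. -/
inductive Err : R → Tm R → Prop
  | chk {A B : R} {M : Tm R} : ¬ dom A B → Err A (.chk (.grd B M))
  | ctxApp {A : R} {M N : Tm R} : Err A M → Err A (.app M N)
  | ctxFix {A : R} {M : Tm R} : Err A M → Err A (.fix M)
  | ctxBind {A : R} {M N : Tm R} : Err A M → Err A (.bind M N)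
  | ctxChk {A : R} {M : Tm R} : Err A M → Err A (.chk M)
  | ctxMod {A : R} {m : Mod R} {M : Tm R} : Err (m.app A) M → Err A (.mod m M)

/-- Multi-step evaluation. -/
def Evals (A : R) : Tm R → Tm R → Prop := Relation.ReflTransGen (Eval A)

/-- Divergence under context role `A`. -/
def Diverges (A : R) (M : Tm R) : Prop :=
  ∃ f : ℕ → Tm R, f 0 = M ∧ ∀ n, Eval A (f n) (f (n+1))

/-- Types: base, arrow, guard `A⊳T`, computation `A○T`. -/
inductive Ty (R : Type*) where
  | base
  | arrow (S T : Ty R)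
  | grd (A : R) (T : Ty R)
  | comp (A : R) (T : Ty R)

/-- Subtyping, indexed by the system: `true` is the first ("sufficient")
system, `false` the second ("necessary") one. -/
inductive Sub : Bool → Ty R → Ty R → Prop
  | base {s} : Sub s .base .base
  | arrow {s} {S S' T T' : Ty R} :
      Sub s S' S → Sub s T T' → Sub s (.arrow S T) (.arrow S' T')
  | grd {s} {A A' : R} {T T' : Ty R} :
      (s = true → dom A' A) → (s = false → dom A A') → Sub s T T' →
      Sub s (.grd A T) (.grd A' T')
  | comp {s} {A A' : R} {T T' : Ty R} :
      (s = true → dom A' A) → (s = false → dom A A') → Sub s T T' →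
      Sub s (.comp A T) (.comp A' T')

/-- Typing judgment of the two λ-RBAC type systems. -/
inductive Typing : Bool → List (Ty R) → Tm R → Ty R → Prop
  | base {s Γ n} : Typing s Γ (.base n) .base
  | var {s Γ n T} : Γ[n]? = some T → Typing s Γ (.var n) T
  | sub {s Γ M T T'} : Typing s Γ M T → Sub s T T' → Typing s Γ M T'
  | abs {s Γ M S T} : Typing s (S :: Γ) M T → Typing s Γ (.abs M) (.arrow S T)
  | app {s Γ M N S T} :
      Typing s Γ M (.arrow S T) → Typing s Γ N S → Typing s Γ (.app M N) T
  | fix {s Γ M T} : Typing s Γ M (.arrow T T) → Typing s Γ (.fix M) T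
  | grd {s Γ M A T} : Typing s Γ M T → Typing s Γ (.grd A M) (.grd A T)
  | chk {s Γ M A T} : Typing s Γ M (.grd A T) → Typing s Γ (.chk M) (.comp A T)
  | unit {s Γ M T} : Typing s Γ M T → Typing s Γ (.unit M) (.comp ⊥ T)
  | bind {s Γ M N A B T S} :
      Typing s Γ M (.comp A T) → Typing s (T :: Γ) N (.comp B S) →
      Typing s Γ (.bind M N) (.comp (A ⊔ B) S)
  | modUp {s Γ M A B T} :
      Typing s Γ M (.comp B T) →
      Typing s Γ (.mod (.up A) M) (.comp (B ⊓ Aᶜ) T)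
  | modDn {s Γ M A B T} :
      Typing s Γ M (.comp B T) → (s = true → dom A B) →
      Typing s Γ (.mod (.dn A) M) (.comp B T)

/-- Type compatibility. -/
def Compat (T S : Ty R) : Prop :=
  T = S ∨ ∃ (A B : R) (U : Ty R), T = .comp A U ∧ S = .comp B U

/-- A role dominates a type. -/
def DomTy (A : R) : Ty R → Prop
  | .comp B _ => dom A B
  | _ => True

end LRBAC

open LRBAC
section Aux
variable {R : Type*} [BooleanAlgebra R]

lemma dom_iff {A B : R} : dom A B ↔ B ≤ A := by
  rw [dom, eq_comm, sup_eq_left]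

lemma dom_trans {A B C : R} (h1 : dom A B) (h2 : dom B C) : dom A C :=
  dom_iff.mpr (le_trans (dom_iff.mp h2) (dom_iff.mp h1))

lemma Sub.refl' {s : Bool} (T : Ty R) : Sub s T T := by
  induction T with
  | base => exact .base
  | arrow S T ihS ihT => exact .arrow ihS ihT
  | grd A T ih => exact .grd (fun _ => dom_iff.mpr le_rfl) (fun _ => dom_iff.mpr le_rfl) ih
  | comp A T ih => exact .comp (fun _ => dom_iff.mpr le_rfl) (fun _ => dom_iff.mpr le_rfl) ih

lemma Sub.trans' {s : Bool} {T₁ T₂ T₃ : Ty R} (h1 : Sub s T₁ T₂) (h2 : Sub s T₂ T₃) :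
    Sub s T₁ T₃ := by
  induction T₂ generalizing T₁ T₃ with
  | base => cases h1; exact h2
  | arrow S T ihS ihT =>
    cases h1 with
    | arrow hS hT =>
      cases h2 with
      | arrow hS' hT' => exact .arrow (ihS hS' hS) (ihT hT hT')
  | grd A T ih =>
    cases h1 with
    | grd hd1 hd2 hT =>
      cases h2 with
      | grd hd1' hd2' hT' =>
        exact .grd (fun h => dom_trans (hd1' h) (hd1 h)) (fun h => dom_trans (hd2 h) (hd2' h))
          (ih hT hT')
  | comp A T ih =>
    cases h1 with
    | comp hd1 hd2 hT =>
      cases h2 with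
      | comp hd1' hd2' hT' =>
        exact .comp (fun h => dom_trans (hd1' h) (hd1 h)) (fun h => dom_trans (hd2 h) (hd2' h))
          (ih hT hT')

end Aux
section Aux2
variable {R : Type*} [BooleanAlgebra R]

lemma weaken : ∀ {s : Bool} {Γ : List (Ty R)} {M : Tm R} {T : Ty R}, Typing s Γ M T →
    ∀ (Δ₁ Δ₂ : List (Ty R)) (U : Ty R), Γ = Δ₁ ++ Δ₂ →
    Typing s (Δ₁ ++ U :: Δ₂) (Tm.shift 1 Δ₁.length M) T := by
  intro s Γ M T h
  induction h with
  | base => intro Δ₁ Δ₂ U hΓ; exact .base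
  | @var _ n T hn =>
    intro Δ₁ Δ₂ U hΓ; subst hΓ
    show Typing _ _ (.var (if n < Δ₁.length then n else n + 1)) _
    split
    · next hlt =>
      refine .var ?_
      rw [List.getElem?_append_left hlt]
      rwa [List.getElem?_append_left hlt] at hn
    · next hge =>
      push_neg at hge
      refine .var ?_
      rw [List.getElem?_append_right (by omega)]
      rw [List.getElem?_append_right hge] at hn
      have : n + 1 - Δ₁.length = (n - Δ₁.length) + 1 := by omega
      rw [this]
      simpa using hn
  | sub hM hs ih => intro Δ₁ Δ₂ U hΓ; exact .sub (ih _ _ _ hΓ) hs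
  | @abs _ M S T hM ih =>
    intro Δ₁ Δ₂ U hΓ; subst hΓ
    exact .abs (ih (S :: Δ₁) Δ₂ U rfl)
  | app hM hN ihM ihN =>
    intro Δ₁ Δ₂ U hΓ; exact .app (ihM _ _ _ hΓ) (ihN _ _ _ hΓ)
  | fix hM ih => intro Δ₁ Δ₂ U hΓ; exact .fix (ih _ _ _ hΓ)
  | grd hM ih => intro Δ₁ Δ₂ U hΓ; exact .grd (ih _ _ _ hΓ)
  | chk hM ih => intro Δ₁ Δ₂ U hΓ; exact .chk (ih _ _ _ hΓ)
  | unit hM ih => intro Δ₁ Δ₂ U hΓ; exact .unit (ih _ _ _ hΓ)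
  | @bind _ M N _ _ T _ hM hN ihM ihN =>
    intro Δ₁ Δ₂ U hΓ; subst hΓ
    exact .bind (ihM _ _ _ rfl) (ihN (T :: Δ₁) Δ₂ U rfl)
  | modUp hM ih => intro Δ₁ Δ₂ U hΓ; exact .modUp (ih _ _ _ hΓ)
  | modDn hM hd ih => intro Δ₁ Δ₂ U hΓ; exact .modDn (ih _ _ _ hΓ) hd

lemma subst_typing : ∀ {s : Bool} {Γ : List (Ty R)} {M : Tm R} {T : Ty R}, Typing s Γ M T →
    ∀ (Δ₁ Δ₂ : List (Ty R)) (S : Ty R) (N : Tm R), Γ = Δ₁ ++ S :: Δ₂ →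
    Typing s (Δ₁ ++ Δ₂) N S →
    Typing s (Δ₁ ++ Δ₂) (Tm.subst Δ₁.length N M) T := by
  intro s Γ M T h
  induction h with
  | base => intro Δ₁ Δ₂ S N hΓ hN; exact .base
  | @var _ n T hn =>
    intro Δ₁ Δ₂ S N hΓ hN; subst hΓ
    show Typing _ _ (if n = Δ₁.length then N else if Δ₁.length < n then .var (n-1) else .var n) _
    split
    · next heq =>
      subst heq
      rw [List.getElem?_append_right le_rfl] at hn
      simp at hn
      subst hn
      exact hN
    · next hne =>
      split
      · next hlt =>
        refine .var ?_
        rw [List.getElem?_append_right (by omega)]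
        rw [List.getElem?_append_right (by omega)] at hn
        have : n - Δ₁.length = (n - 1 - Δ₁.length) + 1 := by omega
        rw [this] at hn
        simpa using hn
      · next hge =>
        have hlt : n < Δ₁.length := by omega
        refine .var ?_
        rw [List.getElem?_append_left hlt]
        rwa [List.getElem?_append_left hlt] at hn
  | sub hM hs ih => intro Δ₁ Δ₂ S N hΓ hN; exact .sub (ih _ _ _ _ hΓ hN) hs
  | @abs _ M S' T hM ih =>
    intro Δ₁ Δ₂ S N hΓ hN; subst hΓ
    refine .abs (ih (S' :: Δ₁) Δ₂ S (Tm.shift 1 0 N) rfl ?_)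
    exact weaken hN [] (Δ₁ ++ Δ₂) S' rfl
  | app hM hN' ihM ihN =>
    intro Δ₁ Δ₂ S N hΓ hN; exact .app (ihM _ _ _ _ hΓ hN) (ihN _ _ _ _ hΓ hN)
  | fix hM ih => intro Δ₁ Δ₂ S N hΓ hN; exact .fix (ih _ _ _ _ hΓ hN)
  | grd hM ih => intro Δ₁ Δ₂ S N hΓ hN; exact .grd (ih _ _ _ _ hΓ hN)
  | chk hM ih => intro Δ₁ Δ₂ S N hΓ hN; exact .chk (ih _ _ _ _ hΓ hN)
  | unit hM ih => intro Δ₁ Δ₂ S N hΓ hN; exact .unit (ih _ _ _ _ hΓ hN)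
  | @bind _ M N' _ _ T _ hM hN' ihM ihN =>
    intro Δ₁ Δ₂ S N hΓ hN; subst hΓ
    refine .bind (ihM _ _ _ _ rfl hN) (ihN (T :: Δ₁) Δ₂ S (Tm.shift 1 0 N) rfl ?_)
    exact weaken hN [] (Δ₁ ++ Δ₂) T rfl
  | modUp hM ih => intro Δ₁ Δ₂ S N hΓ hN; exact .modUp (ih _ _ _ _ hΓ hN)
  | modDn hM hd ih => intro Δ₁ Δ₂ S N hΓ hN; exact .modDn (ih _ _ _ _ hΓ hN) hd

lemma subst0 {s : Bool} {M N : Tm R} {S T : Ty R}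
    (hM : Typing s [S] M T) (hN : Typing s [] N S) :
    Typing s [] (Tm.subst 0 N M) T :=
  subst_typing hM [] [] S N rfl hN

end Aux2
section Aux3
variable {R : Type*} [BooleanAlgebra R]

lemma inv_base : ∀ {s : Bool} {Γ : List (Ty R)} {P : Tm R} {T : Ty R}, Typing s Γ P T →
    ∀ n, P = .base n → Sub s .base T := by
  intro s Γ P T h
  induction h with
  | base => exact fun _ _ => Sub.refl' _
  | sub hM hs ih => exact fun n heq => Sub.trans' (ih n heq) hs
  | _ => intro _ heq <;> simp_all

lemma inv_var : ∀ {s : Bool} {Γ : List (Ty R)} {P : Tm R} {T : Ty R}, Typing s Γ P T →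
    ∀ n, P = .var n → ∃ U, Γ[n]? = some U ∧ Sub s U T := by
  intro s Γ P T h
  induction h with
  | var hn => intro n heq; cases heq; exact ⟨_, hn, Sub.refl' _⟩
  | sub hM hs ih =>
    intro n heq
    obtain ⟨U, hU, hsub⟩ := ih n heq
    exact ⟨U, hU, Sub.trans' hsub hs⟩
  | _ => intro _ heq <;> simp_all

lemma inv_abs : ∀ {s : Bool} {Γ : List (Ty R)} {P : Tm R} {T : Ty R}, Typing s Γ P T →
    ∀ M, P = .abs M → ∃ S U, Typing s (S :: Γ) M U ∧ Sub s (.arrow S U) T := by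
  intro s Γ P T h
  induction h with
  | abs hM => intro M heq; cases heq; exact ⟨_, _, hM, Sub.refl' _⟩
  | sub hM hs ih =>
    intro M heq
    obtain ⟨S, U, hM', hsub⟩ := ih M heq
    exact ⟨S, U, hM', Sub.trans' hsub hs⟩
  | _ => intro _ heq <;> simp_all

lemma inv_app : ∀ {s : Bool} {Γ : List (Ty R)} {P : Tm R} {T : Ty R}, Typing s Γ P T →
    ∀ M N, P = .app M N → ∃ S U, Typing s Γ M (.arrow S U) ∧ Typing s Γ N S ∧ Sub s U T := by
  intro s Γ P T h
  induction h with
  | app hM hN => intro M N heq; cases heq; exact ⟨_, _, hM, hN, Sub.refl' _⟩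
  | sub hM hs ih =>
    intro M N heq
    obtain ⟨S, U, hM', hN', hsub⟩ := ih M N heq
    exact ⟨S, U, hM', hN', Sub.trans' hsub hs⟩
  | _ => intro _ _ heq <;> simp_all

lemma inv_fix : ∀ {s : Bool} {Γ : List (Ty R)} {P : Tm R} {T : Ty R}, Typing s Γ P T →
    ∀ M, P = .fix M → ∃ U, Typing s Γ M (.arrow U U) ∧ Sub s U T := by
  intro s Γ P T h
  induction h with
  | fix hM => intro M heq; cases heq; exact ⟨_, hM, Sub.refl' _⟩
  | sub hM hs ih =>
    intro M heq
    obtain ⟨U, hM', hsub⟩ := ih M heq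
    exact ⟨U, hM', Sub.trans' hsub hs⟩
  | _ => intro _ heq <;> simp_all

lemma inv_grd : ∀ {s : Bool} {Γ : List (Ty R)} {P : Tm R} {T : Ty R}, Typing s Γ P T →
    ∀ B M, P = .grd B M → ∃ U, Typing s Γ M U ∧ Sub s (.grd B U) T := by
  intro s Γ P T h
  induction h with
  | grd hM => intro B M heq; cases heq; exact ⟨_, hM, Sub.refl' _⟩
  | sub hM hs ih =>
    intro B M heq
    obtain ⟨U, hM', hsub⟩ := ih B M heq
    exact ⟨U, hM', Sub.trans' hsub hs⟩
  | _ => intro _ _ heq <;> simp_all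

lemma inv_chk : ∀ {s : Bool} {Γ : List (Ty R)} {P : Tm R} {T : Ty R}, Typing s Γ P T →
    ∀ M, P = .chk M → ∃ B U, Typing s Γ M (.grd B U) ∧ Sub s (.comp B U) T := by
  intro s Γ P T h
  induction h with
  | chk hM => intro M heq; cases heq; exact ⟨_, _, hM, Sub.refl' _⟩
  | sub hM hs ih =>
    intro M heq
    obtain ⟨B, U, hM', hsub⟩ := ih M heq
    exact ⟨B, U, hM', Sub.trans' hsub hs⟩
  | _ => intro _ heq <;> simp_all

lemma inv_unit : ∀ {s : Bool} {Γ : List (Ty R)} {P : Tm R} {T : Ty R}, Typing s Γ P T →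
    ∀ M, P = .unit M → ∃ U, Typing s Γ M U ∧ Sub s (.comp ⊥ U) T := by
  intro s Γ P T h
  induction h with
  | unit hM => intro M heq; cases heq; exact ⟨_, hM, Sub.refl' _⟩
  | sub hM hs ih =>
    intro M heq
    obtain ⟨U, hM', hsub⟩ := ih M heq
    exact ⟨U, hM', Sub.trans' hsub hs⟩
  | _ => intro _ heq <;> simp_all

lemma inv_bind : ∀ {s : Bool} {Γ : List (Ty R)} {P : Tm R} {T : Ty R}, Typing s Γ P T →
    ∀ M N, P = .bind M N → ∃ A₁ A₂ U S', Typing s Γ M (.comp A₁ U) ∧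
      Typing s (U :: Γ) N (.comp A₂ S') ∧ Sub s (.comp (A₁ ⊔ A₂) S') T := by
  intro s Γ P T h
  induction h with
  | bind hM hN => intro M N heq; cases heq; exact ⟨_, _, _, _, hM, hN, Sub.refl' _⟩
  | sub hM hs ih =>
    intro M N heq
    obtain ⟨A₁, A₂, U, S', hM', hN', hsub⟩ := ih M N heq
    exact ⟨A₁, A₂, U, S', hM', hN', Sub.trans' hsub hs⟩
  | _ => intro _ _ heq <;> simp_all

lemma inv_modUp : ∀ {s : Bool} {Γ : List (Ty R)} {P : Tm R} {T : Ty R}, Typing s Γ P T →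
    ∀ B M, P = .mod (.up B) M → ∃ C U, Typing s Γ M (.comp C U) ∧
      Sub s (.comp (C ⊓ Bᶜ) U) T := by
  intro s Γ P T h
  induction h with
  | modUp hM => intro B M heq; cases heq; exact ⟨_, _, hM, Sub.refl' _⟩
  | modDn hM hd => intro B M heq; simp [Tm.mod.injEq] at heq
  | sub hM hs ih =>
    intro B M heq
    obtain ⟨C, U, hM', hsub⟩ := ih B M heq
    exact ⟨C, U, hM', Sub.trans' hsub hs⟩
  | _ => intro _ _ heq <;> simp_all

lemma inv_modDn : ∀ {s : Bool} {Γ : List (Ty R)} {P : Tm R} {T : Ty R}, Typing s Γ P T →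
    ∀ B M, P = .mod (.dn B) M → ∃ C U, Typing s Γ M (.comp C U) ∧
      (s = true → dom B C) ∧ Sub s (.comp C U) T := by
  intro s Γ P T h
  induction h with
  | modDn hM hd => intro B M heq; cases heq; exact ⟨_, _, hM, hd, Sub.refl' _⟩
  | modUp hM => intro B M heq; simp [Tm.mod.injEq] at heq
  | sub hM hs ih =>
    intro B M heq
    obtain ⟨C, U, hM', hd, hsub⟩ := ih B M heq
    exact ⟨C, U, hM', hd, Sub.trans' hsub hs⟩
  | _ => intro _ _ heq <;> simp_all

end Aux3
set_option linter.unnecessarySeqFocus false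
section Aux4
variable {R : Type*} [BooleanAlgebra R]

lemma canon_arrow {s : Bool} {V : Tm R} {S U : Ty R}
    (h : Typing s [] V (.arrow S U)) (hv : V.IsValue) : ∃ M, V = .abs M := by
  cases hv with
  | base n => have := inv_base h n rfl; cases this
  | var n => obtain ⟨W, hW, -⟩ := inv_var h n rfl; simp at hW
  | abs M => exact ⟨M, rfl⟩
  | grd B M => obtain ⟨W, -, hsub⟩ := inv_grd h B M rfl; cases hsub
  | unit M => obtain ⟨W, -, hsub⟩ := inv_unit h M rfl; cases hsub

lemma canon_grd {V : Tm R} {B : R} {U : Ty R}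
    (h : Typing true [] V (.grd B U)) (hv : V.IsValue) :
    ∃ B' M, V = .grd B' M ∧ dom B B' := by
  cases hv with
  | base n => have := inv_base h n rfl; cases this
  | var n => obtain ⟨W, hW, -⟩ := inv_var h n rfl; simp at hW
  | abs M => obtain ⟨S, W, -, hsub⟩ := inv_abs h M rfl; cases hsub
  | grd B' M =>
    obtain ⟨W, -, hsub⟩ := inv_grd h B' M rfl
    cases hsub with
    | grd hd1 hd2 => exact ⟨B', M, rfl, hd1 rfl⟩
  | unit M => obtain ⟨W, -, hsub⟩ := inv_unit h M rfl; cases hsub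

lemma canon_comp {s : Bool} {V : Tm R} {B : R} {U : Ty R}
    (h : Typing s [] V (.comp B U)) (hv : V.IsValue) :
    ∃ M U', V = .unit M ∧ Typing s [] M U' ∧ Sub s U' U := by
  cases hv with
  | base n => have := inv_base h n rfl; cases this
  | var n => obtain ⟨W, hW, -⟩ := inv_var h n rfl; simp at hW
  | abs M => obtain ⟨S, W, -, hsub⟩ := inv_abs h M rfl; cases hsub
  | grd B' M => obtain ⟨W, -, hsub⟩ := inv_grd h B' M rfl; cases hsub
  | unit M =>
    obtain ⟨W, hM, hsub⟩ := inv_unit h M rfl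
    cases hsub with
    | comp hd1 hd2 hW => exact ⟨M, W, rfl, hM, hW⟩

lemma dom_bot {A : R} : dom A ⊥ := dom_iff.mpr bot_le

lemma sub_comp_true {B B' : R} {U U' : Ty R} (hd : dom B' B) (hU : Sub true U U') :
    Sub true (Ty.comp B U) (Ty.comp B' U') :=
  .comp (fun _ => hd) (fun h => by cases h) hU

lemma preservation : ∀ {A : R} {M M' : Tm R}, Eval A M M' →
    ∀ {T : Ty R}, Typing true [] M T → Typing true [] M' T := by
  intro A M M' hev
  induction hev with
  | @rApp _ M N =>
    intro T h
    obtain ⟨S, U, hM, hN, hsub⟩ := inv_app h (.abs M) N rfl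
    obtain ⟨S', U', hM', hsub'⟩ := inv_abs hM M rfl
    cases hsub' with
    | arrow hS hU =>
      exact .sub (subst0 hM' (.sub hN hS)) (Sub.trans' hU hsub)
  | @cApp _ M M' N hM ih =>
    intro T h
    obtain ⟨S, U, hM1, hN, hsub⟩ := inv_app h M N rfl
    exact .sub (.app (ih hM1) hN) hsub
  | @rFix _ M =>
    intro T h
    obtain ⟨U, hM, hsub⟩ := inv_fix h (.abs M) rfl
    obtain ⟨U₁, U₂, hM', hsub'⟩ := inv_abs hM M rfl
    cases hsub' with
    | arrow hU1 hU2 =>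
      have hfix : Typing true [] (.fix (.abs M)) U₁ :=
        .fix (.sub (.abs hM') (.arrow (Sub.refl' _) (Sub.trans' hU2 hU1)))
      exact .sub (subst0 hM' hfix) (Sub.trans' hU2 hsub)
  | cFix hM ih =>
    intro T h
    obtain ⟨U, hM1, hsub⟩ := inv_fix h _ rfl
    exact .sub (.fix (ih hM1)) hsub
  | @rChk _ B M hd =>
    intro T h
    obtain ⟨C, U, hM, hsub⟩ := inv_chk h (.grd B M) rfl
    obtain ⟨U', hM', hsub'⟩ := inv_grd hM B M rfl
    cases hsub' with
    | grd hd1 hd2 hU =>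
      exact .sub (.sub (.unit hM') (sub_comp_true dom_bot hU)) hsub
  | cChk hM ih =>
    intro T h
    obtain ⟨C, U, hM1, hsub⟩ := inv_chk h _ rfl
    exact .sub (.chk (ih hM1)) hsub
  | @rBind _ M N =>
    intro T h
    obtain ⟨A₁, A₂, U, S', hM, hN, hsub⟩ := inv_bind h (.unit M) N rfl
    obtain ⟨W, hM', hsub'⟩ := inv_unit hM M rfl
    cases hsub' with
    | comp hd1 hd2 hW =>
      have hMU : Typing true [] M U := .sub hM' hW
      have : Typing true [] (Tm.subst 0 M N) (.comp A₂ S') := subst0 hN hMU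
      exact .sub (.sub this (sub_comp_true (dom_iff.mpr le_sup_right) (Sub.refl' _))) hsub
  | cBind hM ih =>
    intro T h
    obtain ⟨A₁, A₂, U, S', hM1, hN, hsub⟩ := inv_bind h _ _ rfl
    exact .sub (.bind (ih hM1) hN) hsub
  | @rMod _ m V hv =>
    intro T h
    cases m with
    | up B =>
      obtain ⟨C, U, hV, hsub⟩ := inv_modUp h B V rfl
      obtain ⟨M₀, U', hVeq, hM₀, hsub'⟩ := canon_comp hV hv
      subst hVeq
      exact .sub (.sub (.unit hM₀) (sub_comp_true dom_bot hsub')) hsub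
    | dn B =>
      obtain ⟨C, U, hV, hd, hsub⟩ := inv_modDn h B V rfl
      exact .sub hV hsub
  | @cMod _ m M M' hM ih =>
    intro T h
    cases m with
    | up B =>
      obtain ⟨C, U, hM1, hsub⟩ := inv_modUp h B M rfl
      exact .sub (.modUp (ih hM1)) hsub
    | dn B =>
      obtain ⟨C, U, hM1, hd, hsub⟩ := inv_modDn h B M rfl
      exact .sub (.modDn (ih hM1) hd) hsub

end Aux4
section Aux5
variable {R : Type*} [BooleanAlgebra R]

lemma domTy_sub {A : R} {T T' : Ty R} (hs : Sub true T T') (hD : DomTy A T') : DomTy A T := by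
  cases hs with
  | base => trivial
  | arrow _ _ => trivial
  | grd _ _ _ => trivial
  | comp hd1 _ _ => exact dom_trans hD (hd1 rfl)

lemma progress : ∀ {s : Bool} {Γ : List (Ty R)} {M : Tm R} {T : Ty R}, Typing s Γ M T →
    s = true → Γ = [] → ∀ A : R, DomTy A T →
    M.IsValue ∨ ∃ M', Eval A M M' := by
  intro s Γ M T h
  induction h with
  | base => intro _ _ _ _; exact Or.inl (.base _)
  | var hn => intro _ hΓ _ _; subst hΓ; simp at hn
  | sub hM hs ih =>
    intro hst hΓ A hD
    subst hst
    exact ih rfl hΓ A (domTy_sub hs hD)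
  | abs hM => intro _ _ _ _; exact Or.inl (.abs _)
  | @app Γ M N S T hM hN ihM ihN =>
    intro hst hΓ A hD
    subst hst; subst hΓ
    rcases ihM rfl rfl A trivial with hv | ⟨M', hM'⟩
    · obtain ⟨M₀, rfl⟩ := canon_arrow hM hv
      exact Or.inr ⟨_, .rApp⟩
    · exact Or.inr ⟨_, .cApp hM'⟩
  | @fix Γ M T hM ihM =>
    intro hst hΓ A hD
    subst hst; subst hΓ
    rcases ihM rfl rfl A trivial with hv | ⟨M', hM'⟩
    · obtain ⟨M₀, rfl⟩ := canon_arrow hM hv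
      exact Or.inr ⟨_, .rFix⟩
    · exact Or.inr ⟨_, .cFix hM'⟩
  | @chk Γ M B T hM ihM =>
    intro hst hΓ A hD
    subst hst; subst hΓ
    rcases ihM rfl rfl A trivial with hv | ⟨M', hM'⟩
    · obtain ⟨B', M₀, rfl, hd⟩ := canon_grd hM hv
      exact Or.inr ⟨_, .rChk (dom_trans hD hd)⟩
    · exact Or.inr ⟨_, .cChk hM'⟩
  | grd hM => intro _ _ _ _; exact Or.inl (.grd _ _)
  | unit hM => intro _ _ _ _; exact Or.inl (.unit _)
  | @bind Γ M N A₁ A₂ T S hM hN ihM ihN =>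
    intro hst hΓ A hD
    subst hst; subst hΓ
    have hD1 : DomTy A (Ty.comp A₁ T) :=
      dom_iff.mpr (le_trans le_sup_left (dom_iff.mp hD))
    rcases ihM rfl rfl A hD1 with hv | ⟨M', hM'⟩
    · obtain ⟨M₀, U', rfl, -, -⟩ := canon_comp hM hv
      exact Or.inr ⟨_, .rBind⟩
    · exact Or.inr ⟨_, .cBind hM'⟩
  | @modUp Γ M B C T hM ihM =>
    intro hst hΓ A hD
    subst hst; subst hΓ
    have hD1 : DomTy (Mod.app (.up B) A) (Ty.comp C T) := by
      show dom (B ⊔ A) C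
      have h1 : C ⊓ Bᶜ ≤ A := dom_iff.mp hD
      refine dom_iff.mpr ?_
      calc C = C ⊓ (B ⊔ Bᶜ) := by simp
        _ = (C ⊓ B) ⊔ (C ⊓ Bᶜ) := inf_sup_left C B Bᶜ
        _ ≤ B ⊔ A := sup_le_sup inf_le_right h1
    rcases ihM rfl rfl (Mod.app (.up B) A) hD1 with hv | ⟨M', hM'⟩
    · exact Or.inr ⟨_, .rMod hv⟩
    · exact Or.inr ⟨_, .cMod hM'⟩
  | @modDn Γ M B C T hM hd ihM =>
    intro hst hΓ A hD
    subst hst; subst hΓ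
    have hD1 : DomTy (Mod.app (.dn B) A) (Ty.comp C T) := by
      show dom (B ⊓ A) C
      exact dom_iff.mpr (le_inf (dom_iff.mp (hd rfl)) (dom_iff.mp hD))
    rcases ihM rfl rfl (Mod.app (.dn B) A) hD1 with hv | ⟨M', hM'⟩
    · exact Or.inr ⟨_, .rMod hv⟩
    · exact Or.inr ⟨_, .cMod hM'⟩

lemma evals_preservation {A : R} {M N : Tm R} {T : Ty R}
    (h : Evals A M N) (hT : Typing true [] M T) : Typing true [] N T := by
  induction h with
  | refl => exact hT
  | tail _ hstep ih => exact preservation hstep ih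

end Aux5
/-- Safety theorem for the first (sufficient) type system. -/
theorem stmt_17 (R : Type*) [BooleanAlgebra R] (A : R) (M : Tm R) (T : Ty R)
    (hT : Typing true [] M T) (hD : DomTy A T) :
    Diverges A M ∨ ∃ V : Tm R, Evals A M V ∧ V.IsValue := by
  by_cases h : ∃ N, Evals A M N ∧ ∀ N', ¬ Eval A N N'
  · obtain ⟨N, hMN, hstop⟩ := h
    have hN : Typing true [] N T := evals_preservation hMN hT
    rcases progress hN rfl rfl A hD with hv | ⟨N', hstep⟩
    · exact Or.inr ⟨N, hMN, hv⟩
    · exact absurd hstep (hstop N')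
  · push_neg at h
    have key : ∀ p : {N // Evals A M N}, ∃ q : {N // Evals A M N}, Eval A p.1 q.1 := by
      rintro ⟨N, hN⟩
      obtain ⟨N', hN'⟩ := h N hN
      exact ⟨⟨N', hN.tail hN'⟩, hN'⟩
    choose g hg using key
    refine Or.inl ⟨fun n => (g^[n] ⟨M, Relation.ReflTransGen.refl⟩).1, rfl, fun n => ?_⟩
    show Eval A (g^[n] ⟨M, Relation.ReflTransGen.refl⟩).1 (g^[n+1] ⟨M, Relation.ReflTransGen.refl⟩).1
    rw [Function.iterate_succ_apply']
    exact hg _
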